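/- There exists an integer k₀ such that for all integers k ≥ k₀, every real h with 0 < h ≤ (2k)^{−2k²}, and every (y_0, …, y_k) ∈ ℝ^{k+1}, | det((p_1(y_i, x_j))_{i,j=0}^{k}) / det((p_2(x_i, x_j))_{i,j=0}^{k}) − ( ∫_{[−h,h]^{k+1}} det((p_1(y_i, x_j + s_j))_{i,j=0}^{k}) ds_0 ⋯ ds_k ) / ( ∫_{[−h,h]^{k+1}} det((p_2(x_i, x_j + s_j))_{i,j=0}^{k}) ds_0 ⋯ ds_k ) | ≤ 1/k. -/

import Mathlib

open MeasureTheory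

/-- The one-dimensional heat kernel `p_t(a,b)`. -/
noncomputable def heatK (t a b : ℝ) : ℝ :=
    (Real.sqrt (2 * Real.pi * t))⁻¹ * Real.exp (-(a - b) ^ 2 / (2 * t))

/-- The equally spaced starting points `x_i = (2i - k)/k`. -/
noncomputable def xPt (k : ℕ) (i : Fin (k + 1)) : ℝ := (2 * (i : ℝ) - k) / k

/-!
For `t ≥ 1` the heat kernel takes values in `[0, 1]` and is `1`-Lipschitz in its second variable,
so shifting every column by at most `h` moves each determinant by at most `(k+1)! (k+1) h`, and
the same holds for the averages of the shifted determinants over the cube `[-h, h]^{k+1}`.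
The denominator is bounded below: `p_2(x_i, x_j) = r_i q_i^j c_j` with `q_i = exp (x_i / k)`,
so it is a rescaled Vandermonde determinant whose nodes are `1 / (2k²)` apart, which gives
`det ≥ 16^{-2(k+1)} (2k²)^{-k(k+1)/2}`. A quotient `a / b` with `|a|, |b| ≤ M` and `b ≥ β` moves
by at most `4 M η / β²` when numerator and denominator move by `η ≤ β² / (4M)`, and for
`h ≤ (2k)^{-2k²}` this is at most `1 / k` once `k ≥ 200`.
-/

open Finset Real Matrix Nat

section HeatKernel

variable {t : ℝ}

lemma inv_sqrt_two_pi_mul_le_one (ht : 1 ≤ t) : (√(2 * π * t))⁻¹ ≤ 1 :=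
  inv_le_one_of_one_le₀ <| one_le_sqrt.mpr <| by nlinarith [pi_gt_three]

lemma heatK_nonneg (t a b : ℝ) : 0 ≤ heatK t a b := by
  unfold heatK; positivity

lemma abs_heatK_le_one (ht : 1 ≤ t) (a b : ℝ) : |heatK t a b| ≤ 1 := by
  rw [abs_of_nonneg (heatK_nonneg t a b), heatK]
  refine mul_le_one₀ (inv_sqrt_two_pi_mul_le_one ht) (exp_nonneg _) (exp_le_one_iff.mpr ?_)
  exact div_nonpos_of_nonpos_of_nonneg (neg_nonpos.mpr (sq_nonneg _)) (by linarith)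

-- Written through `mulExpNegMulSq` so that its bound `abs_mulExpNegMulSq_le` applies.
lemma hasDerivAt_heatK (t a b : ℝ) :
    HasDerivAt (heatK t a) ((√(2 * π * t))⁻¹ * t⁻¹ * mulExpNegMulSq (2 * t)⁻¹ (a - b)) b := by
  have h := (((hasDerivAt_id b).const_sub a).pow 2).neg.div_const (2 * t) |>.exp.const_mul
    (√(2 * π * t))⁻¹
  refine h.congr_deriv ?_
  simp only [mulExpNegSq_apply, Pi.neg_apply, Pi.pow_apply, id,
    show -((2 * t)⁻¹ * (a - b) * (a - b)) = -(a - b) ^ 2 / (2 * t) by ring]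
  by_cases ht : t = 0
  · simp [ht]
  · field_simp; ring

lemma lipschitzWith_heatK (ht : 1 ≤ t) (a : ℝ) : LipschitzWith 1 (heatK t a) := by
  refine lipschitzWith_of_nnnorm_deriv_le (fun b => (hasDerivAt_heatK t a b).differentiableAt)
    fun b => ?_
  rw [← NNReal.coe_le_coe, coe_nnnorm, (hasDerivAt_heatK t a b).deriv, norm_eq_abs, abs_mul,
    abs_of_nonneg (by positivity), NNReal.coe_one]
  calc (√(2 * π * t))⁻¹ * t⁻¹ * |mulExpNegMulSq (2 * t)⁻¹ (a - b)|
      ≤ (√(2 * π * t))⁻¹ * t⁻¹ * (√(2 * t)⁻¹)⁻¹ :=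
        mul_le_mul_of_nonneg_left (abs_mulExpNegMulSq_le (by positivity)) (by positivity)
    _ = (√π)⁻¹ * t⁻¹ := by
        rw [sqrt_inv, inv_inv, show 2 * π * t = π * (2 * t) by ring, sqrt_mul pi_pos.le]
        field_simp
    _ ≤ 1 := mul_le_one₀ (inv_le_one_of_one_le₀ (one_le_sqrt.mpr (by linarith [pi_gt_three])))
        (by positivity) (inv_le_one_of_one_le₀ ht)

end HeatKernel

lemma abs_prod_sub_prod_le {ι : Type*} (s : Finset ι) {f g : ι → ℝ}
    (hf : ∀ i ∈ s, |f i| ≤ 1) (hg : ∀ i ∈ s, |g i| ≤ 1) :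
    |∏ i ∈ s, f i - ∏ i ∈ s, g i| ≤ ∑ i ∈ s, |f i - g i| := by
  induction s using Finset.cons_induction with
  | empty => simp
  | cons a s ha ih =>
    simp only [forall_mem_cons] at hf hg
    rw [prod_cons, prod_cons, sum_cons]
    have hfs : |∏ i ∈ s, f i| ≤ 1 := by
      rw [abs_prod]; exact prod_le_one (fun i _ => abs_nonneg _) hf.2
    calc |f a * ∏ i ∈ s, f i - g a * ∏ i ∈ s, g i|
        = |(f a - g a) * ∏ i ∈ s, f i + g a * (∏ i ∈ s, f i - ∏ i ∈ s, g i)| := by ring_nf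
      _ ≤ |f a - g a| * |∏ i ∈ s, f i| + |g a| * |∏ i ∈ s, f i - ∏ i ∈ s, g i| := by
        rw [← abs_mul, ← abs_mul]; exact abs_add_le _ _
      _ ≤ |f a - g a| * 1 + 1 * ∑ i ∈ s, |f i - g i| := by
        gcongr
        · exact hg.1
        · exact ih hf.2 hg.2
      _ = |f a - g a| + ∑ i ∈ s, |f i - g i| := by ring

lemma abs_det_sub_det_le {n : Type*} [Fintype n] [DecidableEq n] {A B : Matrix n n ℝ}
    (hA : ∀ i j, |A i j| ≤ 1) (hB : ∀ i j, |B i j| ≤ 1) {e : ℝ} (hAB : ∀ i j, |A i j - B i j| ≤ e) :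
    |A.det - B.det| ≤ (Fintype.card n)! * (Fintype.card n * e) := by
  rw [det_apply', det_apply', ← sum_sub_distrib]
  refine (abs_sum_le_sum_abs _ _).trans ?_
  calc ∑ σ : Equiv.Perm n, |(Equiv.Perm.sign σ : ℝ) * ∏ i, A (σ i) i
          - (Equiv.Perm.sign σ : ℝ) * ∏ i, B (σ i) i|
      = ∑ σ : Equiv.Perm n, |∏ i, A (σ i) i - ∏ i, B (σ i) i| := by
        refine sum_congr rfl fun σ _ => ?_
        rw [← mul_sub, abs_mul, abs_unit_intCast, one_mul]
    _ ≤ ∑ _σ : Equiv.Perm n, ∑ _i : n, e := by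
        gcongr with σ
        exact (abs_prod_sub_prod_le _ (fun i _ => hA _ _) (fun i _ => hB _ _)).trans
          (sum_le_sum fun i _ => hAB _ _)
    _ = (Fintype.card n)! * (Fintype.card n * e) := by
        simp [Fintype.card_perm]

section HeatMatrix

variable {n : Type*} [Fintype n] [DecidableEq n] {t : ℝ}

lemma abs_det_heatK_le (ht : 1 ≤ t) (u v : n → ℝ) :
    |(of fun i j => heatK t (u i) (v j)).det| ≤ (Fintype.card n)! := by
  refine (det_le (abv := AbsoluteValue.abs) (x := 1) fun i j => ?_).trans_eq (by simp)
  exact abs_heatK_le_one ht (u i) (v j)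

lemma abs_det_heatK_sub_le (ht : 1 ≤ t) (u v w : n → ℝ) {e : ℝ} (hvw : ∀ j, |v j - w j| ≤ e) :
    |(of fun i j => heatK t (u i) (v j)).det - (of fun i j => heatK t (u i) (w j)).det|
      ≤ (Fintype.card n)! * (Fintype.card n * e) :=
  abs_det_sub_det_le (fun i j => abs_heatK_le_one ht _ _) (fun i j => abs_heatK_le_one ht _ _)
    fun i j => by
      have := (lipschitzWith_heatK ht (u i)).dist_le_mul (v j) (w j)
      rw [Real.dist_eq, Real.dist_eq, NNReal.coe_one, one_mul] at this
      exact this.trans (hvw j)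

lemma abs_det_heatK_add_sub_le (ht : 1 ≤ t) (u x s : n → ℝ) {h : ℝ} (hs : ∀ j, |s j| ≤ h) :
    |(of fun i j => heatK t (u i) (x j + s j)).det - (of fun i j => heatK t (u i) (x j)).det|
      ≤ (Fintype.card n)! * (Fintype.card n * h) :=
  abs_det_heatK_sub_le ht u _ _ fun j => by simpa using hs j

lemma integrableOn_det_heatK_add (ht : 1 ≤ t) (u x : n → ℝ) {S : Set (n → ℝ)} (hS : IsCompact S) :
    IntegrableOn (fun s => (of fun i j => heatK t (u i) (x j + s j)).det) S := by
  have : Continuous fun s : n → ℝ => (of fun i j => heatK t (u i) (x j + s j)).det :=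
    Continuous.matrix_det <| continuous_matrix fun i j =>
      (lipschitzWith_heatK ht (u i)).continuous.comp (continuous_const.add (continuous_apply j))
  exact this.continuousOn.integrableOn_compact hS

end HeatMatrix

lemma Fin.sum_card_Ioi (n : ℕ) : ∑ i : Fin n, #(Ioi i) = n.choose 2 := by
  simp only [Fin.card_Ioi]
  rw [Fin.sum_univ_eq_sum_range (fun i => n - 1 - i), sum_range_reflect (fun i => i) n,
    sum_range_id, Nat.choose_two_right]

lemma det_of_mul_pow_mul {R : Type*} [CommRing R] {n : ℕ} (r q c : Fin n → R) :
    (of fun i j : Fin n => r i * q i ^ (j : ℕ) * c j).det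
      = (∏ i, r i) * (∏ i, ∏ j ∈ Ioi i, (q j - q i)) * ∏ j, c j := by
  have : (of fun i j : Fin n => r i * q i ^ (j : ℕ) * c j)
      = diagonal r * vandermonde q * diagonal c := by
    ext i j
    simp [mul_diagonal, diagonal_mul, vandermonde]
  rw [this, det_mul, det_mul, det_diagonal, det_diagonal, det_vandermonde]

lemma le_det_of_mul_pow_mul {n : ℕ} {r q c : Fin n → ℝ} {ρ δ : ℝ} (hρ : 0 ≤ ρ) (hδ : 0 ≤ δ)
    (hr : ∀ i, ρ ≤ r i) (hc : ∀ j, ρ ≤ c j) (hq : ∀ i j, i < j → δ ≤ q j - q i) :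
    ρ ^ n * δ ^ n.choose 2 * ρ ^ n ≤ (of fun i j : Fin n => r i * q i ^ (j : ℕ) * c j).det := by
  have hprod {f : Fin n → ℝ} (hf : ∀ i, ρ ≤ f i) : ρ ^ n ≤ ∏ i, f i := by
    simpa using prod_le_prod (s := univ) (fun _ _ => hρ) fun i _ => hf i
  have hgaps : δ ^ n.choose 2 ≤ ∏ i, ∏ j ∈ Ioi i, (q j - q i) := by
    rw [← Fin.sum_card_Ioi, ← prod_pow_eq_pow_sum]
    refine prod_le_prod (fun _ _ => by positivity) fun i _ => ?_
    simpa using prod_le_prod (s := Ioi i) (fun _ _ => hδ) fun j hj => hq i j (mem_Ioi.mp hj)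
  have hr0 : 0 ≤ ∏ i, r i := (pow_nonneg hρ n).trans (hprod hr)
  rw [det_of_mul_pow_mul]
  exact mul_le_mul (mul_le_mul (hprod hr) hgaps (by positivity) hr0) (hprod hc) (by positivity)
    (mul_nonneg hr0 ((pow_nonneg hδ _).trans hgaps))

section EquallySpaced

variable {k : ℕ}

lemma abs_xPt_le_one (hk : k ≠ 0) (i : Fin (k + 1)) : |xPt k i| ≤ 1 := by
  have hk0 : (0 : ℝ) < k := by positivity
  have hik : (i : ℝ) ≤ k := by exact_mod_cast Fin.is_le i
  rw [xPt, abs_div, abs_of_pos hk0, div_le_one hk0, abs_le]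
  constructor <;> linarith [(i : ℕ).cast_nonneg (α := ℝ)]

lemma heatK_two_xPt (hk : k ≠ 0) (i j : Fin (k + 1)) :
    heatK 2 (xPt k i) (xPt k j)
      = (√(2 * π * 2))⁻¹ * exp (-xPt k i ^ 2 / 4 - xPt k i / 2) * exp (xPt k i / k) ^ (j : ℕ)
        * exp (-xPt k j ^ 2 / 4) := by
  simp only [heatK, ← exp_nat_mul, mul_assoc, ← exp_add]
  congr 2
  -- `x_i x_j / 2 = j x_i / k - x_i / 2` because `x_j = (2j - k) / k`.
  set x := xPt k i
  rw [xPt]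
  field_simp
  ring

lemma inv_four_le_exp_neg_one : (4 : ℝ)⁻¹ ≤ exp (-1) := by
  linarith [exp_neg_one_gt_d9]

lemma exp_xPt_div_gap (hk : k ≠ 0) {i j : Fin (k + 1)} (hij : i < j) :
    (2 * (k : ℝ) ^ 2)⁻¹ ≤ exp (xPt k j / k) - exp (xPt k i / k) := by
  have hk0 : (0 : ℝ) < k := by positivity
  have hij' : (i : ℝ) + 1 ≤ j := by exact_mod_cast hij
  have hgap : 2 / (k : ℝ) ^ 2 ≤ (xPt k j - xPt k i) / k := by
    rw [xPt, xPt, div_sub_div_same, div_div, div_le_div_iff₀ (by positivity) (by positivity)]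
    nlinarith
  have hexp_i : (4 : ℝ)⁻¹ ≤ exp (xPt k i / k) := by
    refine inv_four_le_exp_neg_one.trans (exp_le_exp.mpr ?_)
    have hk1 : (1 : ℝ) ≤ k := by exact_mod_cast one_le_iff_ne_zero.mpr hk
    rw [le_div_iff₀ hk0]
    nlinarith [abs_le.mp (abs_xPt_le_one hk i)]
  calc (2 * (k : ℝ) ^ 2)⁻¹ = 4⁻¹ * (2 / (k : ℝ) ^ 2) := by field_simp; ring
    _ ≤ exp (xPt k i / k) * (exp ((xPt k j - xPt k i) / k) - 1) := by
        gcongr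
        linarith [add_one_le_exp ((xPt k j - xPt k i) / k)]
    _ = exp (xPt k j / k) - exp (xPt k i / k) := by
        rw [mul_sub, ← exp_add, mul_one]; ring_nf

variable (k) in
noncomputable def gramDetLowerBound : ℝ :=
  (16 ^ (2 * (k + 1)) * (2 * (k : ℝ) ^ 2) ^ (k + 1).choose 2)⁻¹

lemma gramDetLowerBound_pos (hk : k ≠ 0) : 0 < gramDetLowerBound k := by
  unfold gramDetLowerBound; positivity

lemma le_det_heatK_two_xPt (hk : k ≠ 0) :
    gramDetLowerBound k ≤ (of fun i j : Fin (k + 1) => heatK 2 (xPt k i) (xPt k j)).det := by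
  simp_rw [heatK_two_xPt hk]
  refine le_of_eq_of_le ?_ (le_det_of_mul_pow_mul (ρ := 16⁻¹) (by norm_num) (by positivity)
    (fun i => ?_) (fun j => ?_) fun i j hij => exp_xPt_div_gap hk hij)
  · rw [gramDetLowerBound, mul_inv, ← inv_pow, ← inv_pow, two_mul, pow_add]; ring
  · have hx := abs_le.mp (abs_xPt_le_one hk i)
    have hsqrt : √(2 * π * 2) ≤ 4 :=
      sqrt_le_iff.mpr ⟨by norm_num, by nlinarith [pi_le_four]⟩
    calc (16 : ℝ)⁻¹ = 4⁻¹ * 4⁻¹ := by norm_num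
      _ ≤ (√(2 * π * 2))⁻¹ * exp (-xPt k i ^ 2 / 4 - xPt k i / 2) := by
        gcongr
        exact inv_four_le_exp_neg_one.trans (exp_le_exp.mpr (by nlinarith))
  · have hx := abs_le.mp (abs_xPt_le_one hk j)
    calc (16 : ℝ)⁻¹ ≤ 4⁻¹ := by norm_num
      _ ≤ exp (-xPt k j ^ 2 / 4) :=
        inv_four_le_exp_neg_one.trans (exp_le_exp.mpr (by nlinarith))

end EquallySpaced

section Constants

variable {k : ℕ}

lemma two_mul_pow_nine_le_two_pow (hk : 200 ≤ k) : (2 * k) ^ 9 ≤ 2 ^ (k - 1) := by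
  induction k, hk using Nat.le_induction with
  | base => norm_num
  | succ k hk ih =>
    have hsucc : 100 ^ 9 * (k + 1) ^ 9 ≤ 100 ^ 9 * (2 * k ^ 9) := by
      calc 100 ^ 9 * (k + 1) ^ 9 = (100 * (k + 1)) ^ 9 := (mul_pow ..).symm
        _ ≤ (101 * k) ^ 9 := Nat.pow_le_pow_left (by omega) 9
        _ ≤ 100 ^ 9 * (2 * k ^ 9) := by
          rw [mul_pow, ← mul_assoc]; exact Nat.mul_le_mul_right _ (by norm_num)
    calc (2 * (k + 1)) ^ 9 = 2 ^ 9 * (k + 1) ^ 9 := mul_pow ..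
      _ ≤ 2 ^ 9 * (2 * k ^ 9) :=
        Nat.mul_le_mul_left _ (Nat.le_of_mul_le_mul_left hsucc (by norm_num))
      _ = 2 * (2 * k) ^ 9 := by ring
      _ ≤ 2 * 2 ^ (k - 1) := Nat.mul_le_mul_left 2 ih
      _ = 2 ^ (k + 1 - 1) := by
        rw [Nat.add_sub_cancel, ← _root_.pow_succ', Nat.sub_add_cancel (by omega)]

lemma factorial_sq_mul_le (hk : 1 ≤ k) :
    (k + 1)! ^ 2 * (k + 1) ≤ (2 * k) ^ (2 * k + 3) := by
  calc (k + 1)! ^ 2 * (k + 1) ≤ ((k + 1) ^ (k + 1)) ^ 2 * (k + 1) := by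
        gcongr; exact factorial_le_pow (k + 1)
    _ = (k + 1) ^ (2 * k + 3) := by ring
    _ ≤ (2 * k) ^ (2 * k + 3) := Nat.pow_le_pow_left (by omega) _

lemma four_mul_factorial_sq_mul_le (hk : 8 ≤ k) :
    4 * k * ((k + 1)! ^ 2 * (k + 1)) * 16 ^ (4 * (k + 1)) * k ^ (2 * k)
      ≤ (2 * k) ^ (8 * k + 9) := by
  calc 4 * k * ((k + 1)! ^ 2 * (k + 1)) * 16 ^ (4 * (k + 1)) * k ^ (2 * k)
      ≤ (2 * k) ^ 2 * (2 * k) ^ (2 * k + 3) * (2 * k) ^ (4 * (k + 1)) * (2 * k) ^ (2 * k) :=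
        Nat.mul_le_mul (Nat.mul_le_mul (Nat.mul_le_mul (by nlinarith)
          (factorial_sq_mul_le (by omega))) (Nat.pow_le_pow_left (by omega) _))
          (Nat.pow_le_pow_left (by omega) _)
    _ = (2 * k) ^ (8 * k + 9) := by ring

lemma four_mul_factorial_sq_mul_sq_le (hk : 200 ≤ k) :
    4 * k * ((k + 1)! ^ 2 * (k + 1)) * (16 ^ (2 * (k + 1)) * (2 * k ^ 2) ^ (k + 1).choose 2) ^ 2
      ≤ (2 * k) ^ (2 * k ^ 2) := by
  have hchoose : (k + 1).choose 2 * 2 = k ^ 2 + k := by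
    rw [choose_two_right, Nat.div_mul_cancel (even_mul_pred_self _).two_dvd,
      add_tsub_cancel_right]
    ring
  have hD : (16 ^ (2 * (k + 1)) * (2 * k ^ 2) ^ (k + 1).choose 2) ^ 2
      = 16 ^ (4 * (k + 1)) * k ^ (2 * k) * (2 ^ (k ^ 2 + k) * k ^ (2 * k ^ 2)) := by
    rw [mul_pow, ← pow_mul, ← pow_mul, hchoose, mul_pow, ← pow_mul]
    ring
  have hsmall : (2 * k) ^ (8 * k + 9) ≤ 2 ^ (k ^ 2 - k) := by
    calc (2 * k) ^ (8 * k + 9) ≤ (2 * k) ^ (9 * k) := Nat.pow_le_pow_right (by omega) (by omega)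
      _ = ((2 * k) ^ 9) ^ k := by rw [← pow_mul]
      _ ≤ (2 ^ (k - 1)) ^ k := Nat.pow_le_pow_left (two_mul_pow_nine_le_two_pow hk) k
      _ = 2 ^ (k ^ 2 - k) := by rw [← pow_mul, Nat.sub_mul, one_mul, sq]
  calc 4 * k * ((k + 1)! ^ 2 * (k + 1)) * (16 ^ (2 * (k + 1)) * (2 * k ^ 2) ^ (k + 1).choose 2) ^ 2
      = (4 * k * ((k + 1)! ^ 2 * (k + 1)) * 16 ^ (4 * (k + 1)) * k ^ (2 * k))
          * (2 ^ (k ^ 2 + k) * k ^ (2 * k ^ 2)) := by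
        rw [hD]; ring
    _ ≤ 2 ^ (k ^ 2 - k) * (2 ^ (k ^ 2 + k) * k ^ (2 * k ^ 2)) :=
        Nat.mul_le_mul_right _ ((four_mul_factorial_sq_mul_le (by omega)).trans hsmall)
    _ = (2 * k) ^ (2 * k ^ 2) := by
        have : k ≤ k ^ 2 := Nat.le_self_pow two_ne_zero k
        rw [← mul_assoc, ← pow_add, mul_pow]; congr 2; omega

lemma four_mul_factorial_mul_div_gramDetLowerBound_sq_le (hk : 200 ≤ k) {h : ℝ} (hh : 0 ≤ h)
    (hhle : h ≤ ((2 * (k : ℝ)) ^ (2 * k ^ 2))⁻¹) :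
    4 * (k + 1)! * ((k + 1)! * ((k + 1) * h)) / gramDetLowerBound k ^ 2 ≤ 1 / k := by
  have hk0 : (0 : ℝ) < k := by exact_mod_cast (by omega : 0 < k)
  have hconst : (4 * k * ((k + 1)! ^ 2 * (k + 1))
      * (16 ^ (2 * (k + 1)) * (2 * k ^ 2) ^ (k + 1).choose 2) ^ 2 : ℝ) ≤ (2 * k) ^ (2 * k ^ 2) := by
    exact_mod_cast four_mul_factorial_sq_mul_sq_le hk
  rw [gramDetLowerBound, inv_pow, div_inv_eq_mul, le_div_iff₀ hk0]
  calc _ = (4 * k * ((k + 1)! ^ 2 * (k + 1))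
        * (16 ^ (2 * (k + 1)) * (2 * k ^ 2) ^ (k + 1).choose 2) ^ 2 : ℝ) * h := by ring
    _ ≤ (2 * k : ℝ) ^ (2 * k ^ 2) * ((2 * k : ℝ) ^ (2 * k ^ 2))⁻¹ :=
        mul_le_mul hconst hhle hh (by positivity)
    _ = 1 := mul_inv_cancel₀ (by positivity)

end Constants

lemma abs_div_sub_div_le {a b p q M β η : ℝ} (ha : |a| ≤ M) (hb : |b| ≤ M) (hβ : 0 < β)
    (hβb : β ≤ b) (hMη : 4 * M * η ≤ β ^ 2) (hp : |p - a| ≤ η) (hq : |q - b| ≤ η) :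
    |a / b - p / q| ≤ 4 * M * η / β ^ 2 := by
  have hb0 : 0 < b := hβ.trans_le hβb
  have hη : 4 * η ≤ β := by
    have hβM : β * η ≤ M * η :=
      mul_le_mul_of_nonneg_right (hβb.trans ((le_abs_self b).trans hb)) ((abs_nonneg _).trans hp)
    nlinarith
  have hq2 : β / 2 ≤ q := by linarith [(abs_le.mp hq).1]
  have hq0 : 0 < q := by linarith
  have hnum : |a * q - b * p| ≤ 2 * M * η := by
    calc |a * q - b * p| = |a * (q - b) - b * (p - a)| := by ring_nf
      _ ≤ |a| * |q - b| + |b| * |p - a| := by rw [← abs_mul, ← abs_mul]; exact abs_sub _ _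
      _ ≤ M * η + M * η := by gcongr <;> linarith [abs_nonneg a, abs_nonneg b]
      _ = 2 * M * η := by ring
  have hden : β * (β / 2) ≤ |b * q| := by
    rw [abs_of_pos (mul_pos hb0 hq0)]; gcongr
  rw [div_sub_div _ _ hb0.ne' hq0.ne', abs_div]
  calc |a * q - b * p| / |b * q| ≤ 2 * M * η / (β * (β / 2)) :=
        div_le_div₀ (by linarith [abs_nonneg (a * q - b * p)]) hnum (by positivity) hden
    _ = 4 * M * η / β ^ 2 := by field_simp; ring

section SetIntegral

variable {α : Type*} [MeasurableSpace α] {μ : Measure α} {S : Set α}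

lemma abs_setIntegral_div_measureReal_sub_le (hS : 0 < μ.real S) {F : α → ℝ}
    (hF : IntegrableOn F S μ) {a η : ℝ} (hFa : ∀ s ∈ S, |F s - a| ≤ η) :
    |(∫ s in S, F s ∂μ) / μ.real S - a| ≤ η := by
  have hfin : μ S < ⊤ := by
    by_contra h
    simp [measureReal_def, not_lt_top_iff.mp h] at hS
  have hint : ∫ s in S, (F s - a) ∂μ = (∫ s in S, F s ∂μ) - μ.real S * a := by
    rw [integral_sub hF (integrableOn_const hfin.ne), setIntegral_const, smul_eq_mul]
  have := norm_setIntegral_le_of_norm_le_const (f := fun s => F s - a) hfin hFa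
  rw [hint, Real.norm_eq_abs] at this
  rw [← mul_div_cancel_left₀ a hS.ne', ← sub_div, abs_div, abs_of_pos hS, div_le_iff₀ hS]
  exact this

lemma abs_div_sub_setIntegral_div_setIntegral_le (hS : 0 < μ.real S) {F G : α → ℝ}
    (hF : IntegrableOn F S μ) (hG : IntegrableOn G S μ) {a b M β η : ℝ}
    (hFa : ∀ s ∈ S, |F s - a| ≤ η) (hGb : ∀ s ∈ S, |G s - b| ≤ η) (ha : |a| ≤ M) (hb : |b| ≤ M)
    (hβ : 0 < β) (hβb : β ≤ b) (hMη : 4 * M * η ≤ β ^ 2) :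
    |a / b - (∫ s in S, F s ∂μ) / ∫ s in S, G s ∂μ| ≤ 4 * M * η / β ^ 2 := by
  rw [← div_div_div_cancel_right₀ hS.ne' (∫ s in S, F s ∂μ)]
  exact abs_div_sub_div_le ha hb hβ hβb hMη (abs_setIntegral_div_measureReal_sub_le hS hF hFa)
    (abs_setIntegral_div_measureReal_sub_le hS hG hGb)

end SetIntegral

lemma volume_real_Icc_pi_pos {ι : Type*} [Fintype ι] {a b : ι → ℝ} (hab : ∀ i, a i < b i) :
    0 < volume.real (Set.Icc a b) := by
  rw [measureReal_def, Real.volume_Icc_pi_toReal fun i => (hab i).le]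
  exact prod_pos fun i _ => sub_pos.mpr (hab i)

theorem det_ratio_average_bound :
    ∃ k₀ : ℕ, ∀ k : ℕ, k₀ ≤ k → ∀ h : ℝ, 0 < h → h ≤ ((2 * (k : ℝ)) ^ (2 * k ^ 2))⁻¹ →
      ∀ y : Fin (k + 1) → ℝ,
        |Matrix.det (Matrix.of fun i j : Fin (k + 1) => heatK 1 (y i) (xPt k j)) /
            Matrix.det (Matrix.of fun i j : Fin (k + 1) => heatK 2 (xPt k i) (xPt k j)) -
          (∫ s in (Set.Icc (fun _ => -h) (fun _ => h) : Set (Fin (k + 1) → ℝ)),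
              Matrix.det (Matrix.of fun i j : Fin (k + 1) => heatK 1 (y i) (xPt k j + s j))) /
            (∫ s in (Set.Icc (fun _ => -h) (fun _ => h) : Set (Fin (k + 1) → ℝ)),
              Matrix.det (Matrix.of fun i j : Fin (k + 1) =>
                heatK 2 (xPt k i) (xPt k j + s j)))| ≤ 1 / (k : ℝ) := by
  refine ⟨200, fun k hk h hh hhle y => ?_⟩
  have hk0 : k ≠ 0 := by omega
  have hsmall := four_mul_factorial_mul_div_gramDetLowerBound_sq_le hk hh.le hhle
  have hshift {t : ℝ} (ht : 1 ≤ t) (u : Fin (k + 1) → ℝ) :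
      ∀ s ∈ (Set.Icc (fun _ => -h) (fun _ => h) : Set (Fin (k + 1) → ℝ)),
        |(of fun i j => heatK t (u i) (xPt k j + s j)).det
          - (of fun i j => heatK t (u i) (xPt k j)).det| ≤ (k + 1)! * ((k + 1) * h) :=
    fun s hs => by
      simpa using abs_det_heatK_add_sub_le ht u (xPt k) s fun j => abs_le.mpr ⟨hs.1 j, hs.2 j⟩
  have habs {t : ℝ} (ht : 1 ≤ t) (u : Fin (k + 1) → ℝ) :
      |(of fun i j => heatK t (u i) (xPt k j)).det| ≤ (k + 1)! := by
    simpa using abs_det_heatK_le ht u (xPt k)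
  refine (abs_div_sub_setIntegral_div_setIntegral_le (volume_real_Icc_pi_pos fun _ => by linarith)
    (integrableOn_det_heatK_add le_rfl y _ isCompact_Icc)
    (integrableOn_det_heatK_add one_le_two _ _ isCompact_Icc) (hshift le_rfl y)
    (hshift one_le_two _) (habs le_rfl y) (habs one_le_two _) (gramDetLowerBound_pos hk0)
    (le_det_heatK_two_xPt hk0) ?_).trans hsmall
  refine (div_le_one (pow_pos (gramDetLowerBound_pos hk0) 2)).mp (hsmall.trans ?_)
  exact div_le_one_of_le₀ (by exact_mod_cast (by omega : 1 ≤ k)) (by positivity)
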